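/- arXiv:2605.23751 — 4 statements merged into one kernel-verified Lean document; each statement's English description precedes it below -/
import Mathlib

section
/- There exists a real constant δ with 0 < δ < 1 such that for every natural number h ≥ 1 and every natural number d with d ≥ 10h, writing g = 2h, the inequality C(d, h−1) · C(3h−1, 2h) ≤ δ · C(d+2h, 2h) holds (with all binomial coefficients cast to the reals). -/
open Nat

lemma aux_poly (h : ℕ) (hh : 1 ≤ h) :
    6*h*(3*h+1)*(3*h+2) ≤ 11*(h+1)^2*(5*h-1) := by
  obtain ⟨k, rfl⟩ := Nat.exists_eq_add_of_le hh
  have e : 5*(1+k)-1 = 5*k+4 := by omega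
  rw [e]
  nlinarith [sq_nonneg k, k.zero_le]

lemma two_choose_two (h : ℕ) : 2 * Nat.choose h 2 = h * (h-1) := by
  have e := Nat.descFactorial_eq_factorial_mul_choose h 2
  rw [Nat.descFactorial_succ, Nat.descFactorial_one] at e
  have h2 : (2:ℕ)! = 2 := rfl
  rw [h2] at e
  rw [← e, Nat.mul_comm]

lemma aux_pow (h : ℕ) (hh : 1 ≤ h) :
    (5*h-1) * h^(h+1) ≤ 2*h^2*(h+1)^h := by
  rcases Nat.lt_or_ge h 2 with h2 | h2
  · interval_cases h
    · norm_num
  · have hexp : (h+1)^h = ∑ k ∈ Finset.range (h+1), h^k * 1^(h-k) * Nat.choose h k :=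
      add_pow h 1 h
    have hsub : ({h-2, h-1, h} : Finset ℕ) ⊆ Finset.range (h+1) := by
      intro x hx
      simp only [Finset.mem_insert, Finset.mem_singleton] at hx
      simp only [Finset.mem_range]
      omega
    have hsum : ∑ k ∈ ({h-2, h-1, h} : Finset ℕ), h^k * 1^(h-k) * Nat.choose h k
        ≤ (h+1)^h := by
      rw [hexp]
      exact Finset.sum_le_sum_of_subset hsub
    have hne1 : h - 2 ∉ ({h-1, h} : Finset ℕ) := by simp; omega
    have hne2 : h - 1 ∉ ({h} : Finset ℕ) := by simp; omega
    rw [Finset.sum_insert hne1, Finset.sum_insert hne2, Finset.sum_singleton] at hsum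
    have c1 : Nat.choose h (h-1) = h := by
      rw [show h - 1 = h - 1 from rfl]
      rw [Nat.choose_symm (by omega : 1 ≤ h), Nat.choose_one_right]
    have c2 : Nat.choose h (h-2) = Nat.choose h 2 :=
      Nat.choose_symm (by omega : 2 ≤ h)
    simp only [one_pow, mul_one, Nat.choose_self, c1, c2] at hsum
    have e2 : h^(h-1) * h = h^h := by
      rw [← pow_succ]; congr 1; omega
    rw [e2] at hsum
    have key : 2*h^2 * (h^(h-2) * Nat.choose h 2 + (h^h + h^h)) = (5*h-1) * h^(h+1) := by
      have e1 : h^2 * h^(h-2) = h^h := by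
        rw [← pow_add]; congr 1; omega
      have e3 : h^h * h = h^(h+1) := (pow_succ h h).symm
      calc 2*h^2 * (h^(h-2) * Nat.choose h 2 + (h^h + h^h))
          = (h^2 * h^(h-2)) * (2 * Nat.choose h 2) + 4*h * (h^h * h) := by ring
        _ = h^h * (h * (h-1)) + 4*h * h^(h+1) := by rw [e1, e3, two_choose_two]
        _ = (h-1) * (h^h * h) + 4*h * h^(h+1) := by ring
        _ = (h-1) * h^(h+1) + 4*h * h^(h+1) := by rw [e3]
        _ = ((h-1) + 4*h) * h^(h+1) := by ring
        _ = (5*h-1) * h^(h+1) := by congr 1; omega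
    calc (5*h-1) * h^(h+1)
        = 2*h^2 * (h^(h-2) * Nat.choose h 2 + (h^h + h^h)) := key.symm
      _ ≤ 2*h^2 * (h+1)^h := Nat.mul_le_mul_left _ hsum

lemma keylemma (h : ℕ) (hh : 1 ≤ h) :
    3*(3*h+1)*(3*h+2) * h^h ≤ 11*(h+1)^(h+2) := by
  have hpos : 0 < 2*h^2 := by positivity
  apply Nat.le_of_mul_le_mul_left _ hpos
  calc 2*h^2 * (3*(3*h+1)*(3*h+2) * h^h)
      = (6*h*(3*h+1)*(3*h+2)) * (h * h^h) := by ring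
    _ ≤ (11*(h+1)^2*(5*h-1)) * (h * h^h) := Nat.mul_le_mul_right _ (aux_poly h hh)
    _ = 11*(h+1)^2 * ((5*h-1) * h^(h+1)) := by rw [pow_succ]; ring
    _ ≤ 11*(h+1)^2 * (2*h^2*(h+1)^h) := Nat.mul_le_mul_left _ (aux_pow h hh)
    _ = 2*h^2 * (11*(h+1)^(h+2)) := by ring

lemma Kfact (h : ℕ) (h1 : 1 ≤ h) : 2 * (3*h-1)! ≤ (h-1)! * (h-1)! * (11*h)^(h+1) := by
  induction h, h1 using Nat.le_induction with
  | base =>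
    norm_num [Nat.factorial]
  | succ h h1 ih =>
    have ih' := ih
    have e1 : 3*(h+1)-1 = (3*h-1)+3 := by omega
    have e2 : (h+1)-1 = h := by omega
    have e3 : (3*h-1)+1 = 3*h := by omega
    have e4 : (3*h-1)+2 = 3*h+1 := by omega
    have e5 : (3*h-1)+3 = 3*h+2 := by omega
    have efact : (3*(h+1)-1)! = (3*h+2)*((3*h+1)*((3*h)*(3*h-1)!)) := by
      rw [e1, Nat.factorial_succ, Nat.factorial_succ, Nat.factorial_succ, e3, e4]
    have hfact : (h)! = h * (h-1)! := by
      conv_lhs => rw [show h = (h-1)+1 by omega]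
      rw [Nat.factorial_succ]
      congr 1
      omega
    -- main chain
    have step : (3*h)*(3*h+1)*(3*h+2) * ((11*h)^(h+1)) ≤ h^2 * (11*(h+1))^(h+2) := by
      have expand : (3*h)*(3*h+1)*(3*h+2) * ((11*h)^(h+1))
          = 11^(h+1) * (h^2 * (3*(3*h+1)*(3*h+2) * h^h)) := by
        rw [mul_pow, pow_succ]
        ring
      have expand2 : h^2 * (11*(h+1))^(h+2) = 11^(h+1) * (h^2 * (11*(h+1)^(h+2))) := by
        rw [mul_pow, pow_succ]
        ring
      rw [expand, expand2]
      exact Nat.mul_le_mul_left _ (Nat.mul_le_mul_left _ (keylemma h h1))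
    calc 2 * (3*(h+1)-1)!
        = (3*h)*(3*h+1)*(3*h+2) * (2 * (3*h-1)!) := by rw [efact]; ring
      _ ≤ (3*h)*(3*h+1)*(3*h+2) * ((h-1)! * (h-1)! * (11*h)^(h+1)) :=
          Nat.mul_le_mul_left _ ih'
      _ = ((h-1)! * (h-1)!) * ((3*h)*(3*h+1)*(3*h+2) * ((11*h)^(h+1))) := by ring
      _ ≤ ((h-1)! * (h-1)!) * (h^2 * (11*(h+1))^(h+2)) := Nat.mul_le_mul_left _ step
      _ = (h*(h-1)!) * (h*(h-1)!) * (11*(h+1))^(h+2) := by ring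
      _ = ((h+1)-1)! * ((h+1)-1)! * (11*(h+1))^(h+2) := by rw [e2, hfact]

lemma main_nat (h d : ℕ) (h1 : 1 ≤ h) (hd : 10*h ≤ d) :
    2 * (Nat.choose d (h-1) * Nat.choose (3*h-1) (2*h)) ≤ Nat.choose (d+2*h) (2*h) := by
  set a := Nat.choose d (h-1) with ha
  set b := Nat.choose (3*h-1) (2*h) with hb
  set c := Nat.choose (d+2*h) (2*h) with hc
  -- Fact A: (2h)! * c = (d+2h).descFactorial (2h)
  have FA : (d+2*h).descFactorial (2*h) = (2*h)! * c :=
    Nat.descFactorial_eq_factorial_mul_choose _ _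
  -- Fact B: split descFactorial
  have FB : (d+2*h - (h+1)).descFactorial (2*h - (h+1)) * (d+2*h).descFactorial (h+1)
      = (d+2*h).descFactorial (2*h) :=
    Nat.descFactorial_mul_descFactorial (by omega : h+1 ≤ 2*h)
  have eB1 : d+2*h - (h+1) = d+h-1 := by omega
  have eB2 : 2*h - (h+1) = h-1 := by omega
  rw [eB1, eB2] at FB
  -- Fact C: lower bound on (d+2h).descFactorial (h+1)
  have FC : (11*h)^(h+1) ≤ (d+2*h).descFactorial (h+1) := by
    calc (11*h)^(h+1) ≤ (d+h)^(h+1) :=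
          Nat.pow_le_pow_left (by omega) _
      _ = (d+2*h+1 - (h+1))^(h+1) := by congr 1; omega
      _ ≤ (d+2*h).descFactorial (h+1) := Nat.pow_sub_le_descFactorial _ _
  -- Fact D: monotonicity
  have FD : d.descFactorial (h-1) ≤ (d+h-1).descFactorial (h-1) :=
    Nat.descFactorial_le _ (by omega)
  have FE : d.descFactorial (h-1) = (h-1)! * a :=
    Nat.descFactorial_eq_factorial_mul_choose _ _
  -- Fact F: b * (2h)! * (h-1)! = (3h-1)!
  have FF : b * (2*h)! * (h-1)! = (3*h-1)! := by
    have := Nat.choose_mul_factorial_mul_factorial (show 2*h ≤ 3*h-1 by omega)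
    rw [show 3*h-1 - 2*h = h-1 by omega] at this
    exact this
  -- combine
  have big : ((h-1)! * a) * ((11*h)^(h+1)) ≤ (2*h)! * c := by
    calc ((h-1)! * a) * ((11*h)^(h+1))
        ≤ ((d+h-1).descFactorial (h-1)) * ((d+2*h).descFactorial (h+1)) := by
          rw [← FE]
          exact Nat.mul_le_mul FD FC
      _ = (2*h)! * c := by rw [FB, FA]
  have K := Kfact h h1
  have chain : (2 * (a*b)) * ((2*h)! * (h-1)!) ≤ c * ((2*h)! * (h-1)!) := by
    calc (2 * (a*b)) * ((2*h)! * (h-1)!)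
        = a * (2 * (b * (2*h)! * (h-1)!)) := by ring
      _ = a * (2 * (3*h-1)!) := by rw [FF]
      _ ≤ a * ((h-1)! * (h-1)! * (11*h)^(h+1)) := Nat.mul_le_mul_left _ K
      _ = (h-1)! * (((h-1)! * a) * ((11*h)^(h+1))) := by ring
      _ ≤ (h-1)! * ((2*h)! * c) := Nat.mul_le_mul_left _ big
      _ = c * ((2*h)! * (h-1)!) := by ring
  have hpos : 0 < (2*h)! * (h-1)! := Nat.mul_pos (Nat.factorial_pos _) (Nat.factorial_pos _)
  exact Nat.le_of_mul_le_mul_right chain hpos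

theorem halfcover_constant :
    ∃ δ : ℝ, 0 < δ ∧ δ < 1 ∧
      ∀ h d : ℕ, 1 ≤ h → 10 * h ≤ d →
        (Nat.choose d (h - 1) : ℝ) * (Nat.choose (3 * h - 1) (2 * h) : ℝ) ≤
          δ * (Nat.choose (d + 2 * h) (2 * h) : ℝ) := by
  refine ⟨1/2, by norm_num, by norm_num, ?_⟩
  intro h d h1 hd
  have := main_nat h d h1 hd
  have cast := (Nat.cast_le (α := ℝ)).mpr this
  push_cast at cast
  linarith
end

section
/- For every natural number g ≥ 1 and every real number M with M ≥ (4e)^{g+1}, the natural number w := ⌊(g/(4e)) · M^{1/(g+1)}⌋ satisfies g ≤ w and (w : ℝ) · C(w+g, g) ≤ M/4. -/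
open Real in
lemma aux_pow_self_le_exp_mul_factorial (n : ℕ) :
    (n : ℝ) ^ n ≤ Real.exp 1 ^ n * (Nat.factorial n : ℝ) := by
  have h := Real.sum_le_exp_of_nonneg (x := (n : ℝ)) (Nat.cast_nonneg n) (n + 1)
  have hterm : (n : ℝ) ^ n / (Nat.factorial n : ℝ) ≤
      ∑ i ∈ Finset.range (n + 1), (n : ℝ) ^ i / (Nat.factorial i : ℝ) := by
    refine Finset.single_le_sum (f := fun i => (n : ℝ) ^ i / (Nat.factorial i : ℝ)) ?_ ?_
    · intro i _; positivity
    · simp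
  have h2 : (n : ℝ) ^ n / (Nat.factorial n : ℝ) ≤ Real.exp 1 ^ n := by
    rw [← Real.exp_nat_mul, mul_one]
    exact hterm.trans h
  have hfac : (0 : ℝ) < (Nat.factorial n : ℝ) := by
    exact_mod_cast Nat.factorial_pos n
  calc (n : ℝ) ^ n = (n : ℝ) ^ n / (Nat.factorial n : ℝ) * (Nat.factorial n : ℝ) := by
        field_simp
    _ ≤ Real.exp 1 ^ n * (Nat.factorial n : ℝ) :=
        mul_le_mul_of_nonneg_right h2 hfac.le

open Real in
theorem case_two_w_choice (g : ℕ) (hg : 1 ≤ g) (M : ℝ)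
    (hM : (4 * Real.exp 1) ^ (g + 1) ≤ M) :
    let w : ℕ := ⌊((g : ℝ) / (4 * Real.exp 1)) * M ^ ((1 : ℝ) / (g + 1))⌋₊
    g ≤ w ∧ (w : ℝ) * (Nat.choose (w + g) g : ℝ) ≤ M / 4 := by
  intro w
  have hepos : (0 : ℝ) < Real.exp 1 := Real.exp_pos 1
  have he1 : (1 : ℝ) ≤ Real.exp 1 := by nlinarith [Real.add_one_le_exp (1 : ℝ)]
  have hEpos : (0 : ℝ) < 4 * Real.exp 1 := by positivity
  have hMpos : 0 < M := lt_of_lt_of_le (by positivity) hM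
  have hgpos : (0 : ℝ) < (g : ℝ) := by exact_mod_cast hg
  set Y : ℝ := M ^ ((1 : ℝ) / (g + 1)) with hYdef
  have hYpos : 0 < Y := Real.rpow_pos_of_pos hMpos _
  set x : ℝ := (g : ℝ) / (4 * Real.exp 1) * Y with hxdef
  have hxpos : 0 < x := by positivity
  have hYE : 4 * Real.exp 1 ≤ Y := by
    have heq : (4 * Real.exp 1) =
        ((4 * Real.exp 1) ^ (g + 1)) ^ ((1 : ℝ) / (g + 1)) := by
      rw [← Real.rpow_natCast (4 * Real.exp 1) (g + 1), ← Real.rpow_mul hEpos.le]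
      push_cast
      rw [mul_one_div, div_self (by positivity), Real.rpow_one]
    rw [heq, hYdef]
    exact Real.rpow_le_rpow (by positivity) hM (by positivity)
  have hgx : (g : ℝ) ≤ x := by
    calc (g : ℝ) = (g : ℝ) / (4 * Real.exp 1) * (4 * Real.exp 1) := by field_simp
      _ ≤ x := by
          rw [hxdef]
          exact mul_le_mul_of_nonneg_left hYE (by positivity)
  have hgw : g ≤ w := Nat.le_floor hgx
  refine ⟨hgw, ?_⟩
  have hwx : (w : ℝ) ≤ x := Nat.floor_le hxpos.le
  have hgw' : (g : ℝ) ≤ (w : ℝ) := by exact_mod_cast hgw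
  have hwpos : (0 : ℝ) < (w : ℝ) := lt_of_lt_of_le hgpos hgw'
  have hfacpos : (0 : ℝ) < (Nat.factorial g : ℝ) := by
    exact_mod_cast Nat.factorial_pos g
  -- binomial bound
  have h1 : ((w + g).choose g : ℝ) ≤ ((w + g : ℕ) : ℝ) ^ g / (Nat.factorial g : ℝ) :=
    Nat.choose_le_pow_div (α := ℝ) g (w + g)
  have h2 : ((w + g : ℕ) : ℝ) ^ g ≤ (2 * (w : ℝ)) ^ g := by
    apply pow_le_pow_left₀ (by positivity)
    push_cast; linarith
  have hfac : (g : ℝ) ^ g ≤ Real.exp 1 ^ g * (Nat.factorial g : ℝ) :=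
    aux_pow_self_le_exp_mul_factorial g
  have h3 : (2 * (w : ℝ)) ^ g / (Nat.factorial g : ℝ) ≤
      (2 * Real.exp 1 * (w : ℝ) / (g : ℝ)) ^ g := by
    rw [div_pow, div_le_div_iff₀ hfacpos (by positivity)]
    calc (2 * (w : ℝ)) ^ g * (g : ℝ) ^ g
        ≤ (2 * (w : ℝ)) ^ g * (Real.exp 1 ^ g * (Nat.factorial g : ℝ)) :=
          mul_le_mul_of_nonneg_left hfac (by positivity)
      _ = (2 * Real.exp 1 * (w : ℝ)) ^ g * (Nat.factorial g : ℝ) := by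
          rw [mul_pow, mul_pow]; ring
  have hchoose : ((w + g).choose g : ℝ) ≤
      (2 * Real.exp 1 * (w : ℝ) / (g : ℝ)) ^ g := by
    refine h1.trans (le_trans ?_ h3)
    gcongr
  have hbase : 2 * Real.exp 1 * (w : ℝ) / (g : ℝ) ≤ Y / 2 := by
    have hxeq : 2 * Real.exp 1 * x / (g : ℝ) = Y / 2 := by
      rw [hxdef]; field_simp; ring
    rw [← hxeq]
    gcongr
  have hpow : (2 * Real.exp 1 * (w : ℝ) / (g : ℝ)) ^ g ≤ (Y / 2) ^ g :=
    pow_le_pow_left₀ (by positivity) hbase g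
  have hYM : Y * Y ^ g = M := by
    have : Y ^ (g + 1) = M := by
      rw [hYdef, ← Real.rpow_natCast _ (g + 1), ← Real.rpow_mul hMpos.le]
      push_cast
      rw [one_div, inv_mul_cancel₀ (by positivity), Real.rpow_one]
    rw [← this, pow_succ']
  have hg2 : (g : ℝ) ≤ 2 ^ g := by
    have := (Nat.lt_two_pow_self (n := g)).le
    exact_mod_cast this
  have h2gpos : (0 : ℝ) < 2 ^ g := by positivity
  calc (w : ℝ) * ((w + g).choose g : ℝ)
      ≤ x * (Y / 2) ^ g := by
        apply mul_le_mul hwx (hchoose.trans hpow) (by positivity) hxpos.le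
    _ = (g : ℝ) * M / (4 * Real.exp 1 * 2 ^ g) := by
        rw [hxdef, div_pow, ← hYM]; field_simp
    _ ≤ M / 4 := by
        rw [div_le_div_iff₀ (by positivity) (by norm_num)]
        have : (g : ℝ) ≤ Real.exp 1 * 2 ^ g := by nlinarith
        nlinarith
end

section
/- For all real numbers δ₁ > 0 and δ₂ > 0, there exists a natural number g₀ such that for all natural numbers g, d, M with g ≥ g₀, g ≤ d, (d : ℝ) ≤ (g : ℝ)^{2−δ₁} and (M : ℝ) ≤ (g : ℝ)^{δ₂}, the inequality (M : ℝ) · C(d, g) ≤ 4 · (g : ℝ) · C(d+g, g) holds. -/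
open Finset

lemma lemA (d g : ℕ) : (d + g) ^ g * d.choose g ≤ d ^ g * (d + g).choose g := by
  have key : (d + g) ^ g * d.descFactorial g ≤ d ^ g * (d + g).descFactorial g := by
    rw [Nat.descFactorial_eq_prod_range, Nat.descFactorial_eq_prod_range]
    calc (d + g) ^ g * ∏ i ∈ range g, (d - i)
        = ∏ i ∈ range g, ((d + g) * (d - i)) := by
          rw [Finset.prod_mul_distrib, Finset.prod_const, Finset.card_range]
      _ ≤ ∏ i ∈ range g, (d * (d + g - i)) := by
          apply Finset.prod_le_prod'
          intro i hi
          rcases le_or_gt i d with h | h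
          · have h1 : d + g - i = (d - i) + g := by omega
            rw [h1, Nat.add_mul, Nat.mul_add]
            have h2 : g * (d - i) ≤ d * g := by
              calc g * (d - i) ≤ g * d := Nat.mul_le_mul_left g (Nat.sub_le d i)
                _ = d * g := Nat.mul_comm g d
            omega
          · have h1 : d - i = 0 := by omega
            simp [h1]
      _ = d ^ g * ∏ i ∈ range g, (d + g - i) := by
          rw [Finset.prod_mul_distrib, Finset.prod_const, Finset.card_range]
  rw [Nat.descFactorial_eq_factorial_mul_choose, Nat.descFactorial_eq_factorial_mul_choose] at key
  have hfac : 0 < Nat.factorial g := Nat.factorial_pos g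
  refine Nat.le_of_mul_le_mul_left ?_ hfac
  calc Nat.factorial g * ((d + g) ^ g * d.choose g) = (d + g) ^ g * (Nat.factorial g * d.choose g) := by ring
    _ ≤ d ^ g * (Nat.factorial g * (d + g).choose g) := key
    _ = Nat.factorial g * (d ^ g * (d + g).choose g) := by ring

lemma lemB (g k : ℕ) (hk : k ≤ g) (x : ℝ) (hx : 0 ≤ x) :
    (g.choose k : ℝ) * x ^ k ≤ (1 + x) ^ g := by
  rw [add_comm, add_pow]
  have h := Finset.single_le_sum
    (f := fun m => x ^ m * (1 : ℝ) ^ (g - m) * (g.choose m : ℝ))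
    (fun i _ => by positivity) (Finset.mem_range.mpr (Nat.lt_succ_of_le hk))
  simpa [mul_comm] using h

lemma lemC (g k : ℕ) (h : 2 * k ≤ g) : g ^ k ≤ (2 * k) ^ k * g.choose k := by
  have h1 : g ^ k ≤ 2 ^ k * g.descFactorial k := by
    rw [Nat.descFactorial_eq_prod_range]
    calc g ^ k = ∏ _i ∈ range k, g := by
          rw [Finset.prod_const, Finset.card_range]
      _ ≤ ∏ i ∈ range k, (2 * (g - i)) := by
          apply Finset.prod_le_prod'
          intro i hi
          have := Finset.mem_range.mp hi
          omega
      _ = 2 ^ k * ∏ i ∈ range k, (g - i) := by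
          rw [Finset.prod_mul_distrib, Finset.prod_const, Finset.card_range]
  calc g ^ k ≤ 2 ^ k * g.descFactorial k := h1
    _ = 2 ^ k * (Nat.factorial k * g.choose k) := by rw [Nat.descFactorial_eq_factorial_mul_choose]
    _ ≤ 2 ^ k * (k ^ k * g.choose k) := by
        exact Nat.mul_le_mul_left _ (Nat.mul_le_mul_right _ (Nat.factorial_le_pow k))
    _ = (2 * k) ^ k * g.choose k := by rw [Nat.mul_pow]; ring

theorem case_three_combinatorial_core (δ₁ δ₂ : ℝ) (h₁ : 0 < δ₁) (h₂ : 0 < δ₂) :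
    ∃ g₀ : ℕ, ∀ g d M : ℕ, g₀ ≤ g → g ≤ d →
      (d : ℝ) ≤ (g : ℝ) ^ (2 - δ₁) → (M : ℝ) ≤ (g : ℝ) ^ δ₂ →
      (M : ℝ) * (Nat.choose d g : ℝ) ≤ 4 * (g : ℝ) * (Nat.choose (d + g) g : ℝ) := by
  set k : ℕ := ⌈(δ₂ + 1) / δ₁⌉₊ with hkdef
  have hk1 : 1 ≤ k := Nat.ceil_pos.mpr (by positivity)
  have hδk : δ₂ + 1 ≤ δ₁ * k := by
    have := Nat.le_ceil ((δ₂ + 1) / δ₁)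
    rw [div_le_iff₀ h₁] at this
    linarith [this]
  refine ⟨(2 * k) ^ k + 2 * k, ?_⟩
  intro g d M hg hgd hd hM
  have hk2 : 2 * k ≤ g := le_trans (Nat.le_add_left _ _) hg
  have hgk : (2 * k) ^ k ≤ g := le_trans (Nat.le_add_right _ _) hg
  have hg2 : 2 ≤ g := by omega
  have hg1R : (1 : ℝ) ≤ (g : ℝ) := by exact_mod_cast Nat.one_le_of_lt hg2
  have hgpos : (0 : ℝ) < (g : ℝ) := by linarith
  have hdpos : (0 : ℝ) < (d : ℝ) := by
    have : 2 ≤ d := le_trans hg2 hgd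
    exact_mod_cast Nat.lt_of_lt_of_le two_pos this
  -- ratio bound from lemA
  have hA : ((d : ℝ) + g) ^ g * (d.choose g : ℝ) ≤ (d : ℝ) ^ g * ((d + g).choose g : ℝ) := by
    have := lemA d g
    exact_mod_cast this
  have hratio : (1 + (g : ℝ) / d) ^ g * (d.choose g : ℝ) ≤ ((d + g).choose g : ℝ) := by
    have h1 : (1 + (g : ℝ) / d) = ((d : ℝ) + g) / d := by field_simp
    rw [h1, div_pow, div_mul_eq_mul_div, div_le_iff₀ (pow_pos hdpos g)]
    calc ((d : ℝ) + g) ^ g * (d.choose g : ℝ) ≤ (d : ℝ) ^ g * ((d + g).choose g : ℝ) := hA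
      _ = ((d + g).choose g : ℝ) * (d : ℝ) ^ g := by ring
  have hB : (g.choose k : ℝ) * ((g : ℝ) / d) ^ k ≤ (1 + (g : ℝ) / d) ^ g :=
    lemB g k (by omega) _ (by positivity)
  have hC : (g : ℝ) ^ k ≤ ((2 * k : ℕ) : ℝ) ^ k * (g.choose k : ℝ) := by
    exact_mod_cast lemC g k hk2
  -- g^{δ₁-1} ≤ g/d
  have hGD : (g : ℝ) ^ (δ₁ - 1) ≤ (g : ℝ) / d := by
    rw [le_div_iff₀ hdpos]
    calc (g : ℝ) ^ (δ₁ - 1) * d ≤ (g : ℝ) ^ (δ₁ - 1) * (g : ℝ) ^ (2 - δ₁) := by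
          apply mul_le_mul_of_nonneg_left hd (Real.rpow_nonneg hgpos.le _)
      _ = (g : ℝ) ^ ((δ₁ - 1) + (2 - δ₁)) := (Real.rpow_add hgpos _ _).symm
      _ = (g : ℝ) := by norm_num
  have hGG : (g : ℝ) ^ δ₁ ≤ (g : ℝ) * ((g : ℝ) / d) := by
    calc (g : ℝ) ^ δ₁ = (g : ℝ) ^ (1 : ℝ) * (g : ℝ) ^ (δ₁ - 1) := by
          rw [← Real.rpow_add hgpos]; ring_nf
      _ ≤ (g : ℝ) * ((g : ℝ) / d) := by
          rw [Real.rpow_one]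
          exact mul_le_mul_of_nonneg_left hGD hgpos.le
  have hpowk : (g : ℝ) ^ (δ₁ * k) ≤ ((g : ℝ) * ((g : ℝ) / d)) ^ k := by
    calc (g : ℝ) ^ (δ₁ * k) = ((g : ℝ) ^ δ₁) ^ k := by
          rw [← Real.rpow_natCast ((g : ℝ) ^ δ₁) k, ← Real.rpow_mul hgpos.le]
      _ ≤ ((g : ℝ) * ((g : ℝ) / d)) ^ k :=
          pow_le_pow_left₀ (Real.rpow_nonneg hgpos.le _) hGG k
  have hfinal : ((2 * k : ℕ) : ℝ) ^ k * (g : ℝ) ^ δ₂ ≤ (g : ℝ) ^ (δ₁ * k) := by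
    have h2k : ((2 * k : ℕ) : ℝ) ^ k ≤ (g : ℝ) ^ (δ₁ * k - δ₂) := by
      calc ((2 * k : ℕ) : ℝ) ^ k = (((2 * k) ^ k : ℕ) : ℝ) := by push_cast; ring
        _ ≤ (g : ℝ) := by exact_mod_cast hgk
        _ = (g : ℝ) ^ (1 : ℝ) := (Real.rpow_one _).symm
        _ ≤ (g : ℝ) ^ (δ₁ * k - δ₂) := Real.rpow_le_rpow_of_exponent_le hg1R (by linarith)
    calc ((2 * k : ℕ) : ℝ) ^ k * (g : ℝ) ^ δ₂ ≤ (g : ℝ) ^ (δ₁ * k - δ₂) * (g : ℝ) ^ δ₂ :=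
          mul_le_mul_of_nonneg_right h2k (Real.rpow_nonneg hgpos.le _)
      _ = (g : ℝ) ^ (δ₁ * k) := by rw [← Real.rpow_add hgpos]; ring_nf
  -- main chain: g^δ₂ ≤ (1 + g/d)^g
  have h2kpos : (0 : ℝ) < ((2 * k : ℕ) : ℝ) ^ k := by positivity
  have hmain : (g : ℝ) ^ δ₂ ≤ (1 + (g : ℝ) / d) ^ g := by
    have chain : ((2 * k : ℕ) : ℝ) ^ k * (g : ℝ) ^ δ₂ ≤
        ((2 * k : ℕ) : ℝ) ^ k * (1 + (g : ℝ) / d) ^ g := by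
      calc ((2 * k : ℕ) : ℝ) ^ k * (g : ℝ) ^ δ₂ ≤ (g : ℝ) ^ (δ₁ * k) := hfinal
        _ ≤ ((g : ℝ) * ((g : ℝ) / d)) ^ k := hpowk
        _ = (g : ℝ) ^ k * ((g : ℝ) / d) ^ k := mul_pow _ _ _
        _ ≤ (((2 * k : ℕ) : ℝ) ^ k * (g.choose k : ℝ)) * ((g : ℝ) / d) ^ k := by
            apply mul_le_mul_of_nonneg_right hC (by positivity)
        _ = ((2 * k : ℕ) : ℝ) ^ k * ((g.choose k : ℝ) * ((g : ℝ) / d) ^ k) := by ring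
        _ ≤ ((2 * k : ℕ) : ℝ) ^ k * (1 + (g : ℝ) / d) ^ g :=
            mul_le_mul_of_nonneg_left hB (by positivity)
    exact le_of_mul_le_mul_left chain h2kpos
  -- assemble
  have hCnonneg : (0 : ℝ) ≤ (d.choose g : ℝ) := Nat.cast_nonneg _
  calc (M : ℝ) * (d.choose g : ℝ) ≤ (g : ℝ) ^ δ₂ * (d.choose g : ℝ) :=
        mul_le_mul_of_nonneg_right hM hCnonneg
    _ ≤ (1 + (g : ℝ) / d) ^ g * (d.choose g : ℝ) :=
        mul_le_mul_of_nonneg_right hmain hCnonneg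
    _ ≤ ((d + g).choose g : ℝ) := hratio
    _ ≤ 4 * (g : ℝ) * ((d + g).choose g : ℝ) := by
        have hc : (0 : ℝ) ≤ ((d + g).choose g : ℝ) := Nat.cast_nonneg _
        nlinarith [mul_nonneg (by linarith : (0 : ℝ) ≤ 4 * (g : ℝ) - 1) hc]
end

section
/- For all natural numbers d ≥ 1 and g, set r := C(d+g, g). There exist functions u, v : (Fin d → ℝ) → (Fin r → ℝ), depending only on d and g, such that for every polynomial P over ℝ of degree at most g there exist coefficients c : Fin r → ℝ with P(∑_{i} q(i)·k(i)) = ∑_{j} c(j) · u(q)(j) · v(k)(j) for all vectors q, k : Fin d → ℝ. -/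
open Finset

lemma card_sigma_sym (d g : ℕ) (hd : 1 ≤ d) :
    Fintype.card (Σ l : Fin (g + 1), Sym (Fin d) l) = Nat.choose (d + g) g := by
  obtain ⟨d', rfl⟩ := Nat.exists_eq_add_of_le hd
  rw [Fintype.card_sigma]
  have h1 : ∀ l : ℕ, Fintype.card (Sym (Fin (1 + d')) l) = (d' + l).choose l := by
    intro l
    rw [Sym.card_sym_fin_eq_multichoose, Nat.multichoose_eq]
    congr 1
    omega
  simp only [h1]
  rw [Fin.sum_univ_eq_sum_range (fun l => (d' + l).choose l)]
  have h2 : ∀ i ∈ Finset.range (g + 1), (d' + i).choose i = (i + d').choose d' := by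
    intro i _
    rw [Nat.add_comm d' i, Nat.choose_symm_add]
  rw [Finset.sum_congr rfl h2, Nat.sum_range_add_choose]
  rw [show g + d' + 1 = g + (d' + 1) from by omega, ← Nat.choose_symm_add]
  congr 1
  omega

theorem polynomial_bilinear_form (d g : ℕ) (hd : 1 ≤ d) :
    ∃ u v : (Fin d → ℝ) → (Fin (Nat.choose (d + g) g) → ℝ),
      ∀ P : Polynomial ℝ, P.natDegree ≤ g →
        ∃ c : Fin (Nat.choose (d + g) g) → ℝ,
          ∀ q k : Fin d → ℝ,
            P.eval (∑ i, q i * k i) = ∑ j, c j * u q j * v k j := by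
  have e : Fin (Nat.choose (d + g) g) ≃ Σ l : Fin (g + 1), Sym (Fin d) l :=
    (Fintype.equivFinOfCardEq (card_sigma_sym d g hd)).symm
  refine ⟨fun q j => (((e j).2 : Multiset (Fin d)).map q).prod,
         fun k j => (((e j).2 : Multiset (Fin d)).map k).prod, ?_⟩
  intro P hP
  refine ⟨fun j => P.coeff (e j).1 * ((e j).2 : Multiset (Fin d)).countPerms, ?_⟩
  intro q k
  have hsum : ∀ j : Fin (Nat.choose (d + g) g),
      P.coeff (e j).1 * ((e j).2 : Multiset (Fin d)).countPerms *
        (((e j).2 : Multiset (Fin d)).map q).prod * (((e j).2 : Multiset (Fin d)).map k).prod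
      = (fun x : Σ l : Fin (g + 1), Sym (Fin d) l =>
          P.coeff x.1 * ((x.2 : Multiset (Fin d)).countPerms : ℝ) *
            ((x.2 : Multiset (Fin d)).map q).prod * ((x.2 : Multiset (Fin d)).map k).prod) (e j) :=
    fun j => rfl
  calc P.eval (∑ i, q i * k i)
      = ∑ l ∈ Finset.range (g + 1), P.coeff l * (∑ i, q i * k i) ^ l := by
        exact Polynomial.eval_eq_sum_range' (Nat.lt_succ_of_le hP) _
    _ = ∑ l : Fin (g + 1), P.coeff l * (∑ i, q i * k i) ^ (l : ℕ) :=
        (Fin.sum_univ_eq_sum_range (fun l => P.coeff l * (∑ i, q i * k i) ^ l) (g+1)).symm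
    _ = ∑ l : Fin (g + 1), ∑ m : Sym (Fin d) l,
          P.coeff l * ((m : Multiset (Fin d)).countPerms : ℝ) *
            ((m : Multiset (Fin d)).map q).prod * ((m : Multiset (Fin d)).map k).prod := by
        refine Finset.sum_congr rfl fun l _ => ?_
        have hpow : (∑ i, q i * k i) ^ (l : ℕ)
            = ∑ m : Sym (Fin d) l, ((m : Multiset (Fin d)).countPerms : ℝ) *
                ((m : Multiset (Fin d)).map (fun i => q i * k i)).prod := by
          have h := Finset.sum_pow (s := (Finset.univ : Finset (Fin d))) (fun i => q i * k i) (l : ℕ)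
          rw [Finset.sym_univ] at h
          exact h
        rw [hpow, Finset.mul_sum]
        refine Finset.sum_congr rfl fun m _ => ?_
        rw [show ((m : Multiset (Fin d)).map (fun i => q i * k i)).prod
            = ((m : Multiset (Fin d)).map q).prod * ((m : Multiset (Fin d)).map k).prod from
            Multiset.prod_map_mul]
        ring
    _ = ∑ x : Σ l : Fin (g + 1), Sym (Fin d) l,
          P.coeff x.1 * ((x.2 : Multiset (Fin d)).countPerms : ℝ) *
            ((x.2 : Multiset (Fin d)).map q).prod * ((x.2 : Multiset (Fin d)).map k).prod := by
        rw [← Finset.univ_sigma_univ, Finset.sum_sigma]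
    _ = ∑ j, (fun j => P.coeff (e j).1 * ((e j).2 : Multiset (Fin d)).countPerms) j *
          (((e j).2 : Multiset (Fin d)).map q).prod * (((e j).2 : Multiset (Fin d)).map k).prod := by
        rw [← Equiv.sum_comp e (fun x : Σ l : Fin (g + 1), Sym (Fin d) l =>
          P.coeff x.1 * ((x.2 : Multiset (Fin d)).countPerms : ℝ) *
            ((x.2 : Multiset (Fin d)).map q).prod * ((x.2 : Multiset (Fin d)).map k).prod)]
end
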